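/- Let ρ > 0 and let u : ℝⁿ → ℝ be a C² function. Suppose p is a point with |p| < ρ and u(p) > 0, and suppose p is a local maximum of the function F(x) = (ρ² − |x|²)²·u(x) on the open ball of radius ρ. Then Δu(p) ≤ u(p)·( 24|p|²/(ρ² − |p|²)² + 4n/(ρ² − |p|²) ), where Δ is the Euclidean Laplacian and |·| the Euclidean norm. -/

import Mathlib

/-!
Restrict `F = (ρ² - |x|²)² u` to the coordinate lines through `p`. On each line `F = w² h` with
`w(t) = ρ² - |p + t eᵢ|²`, and the one-variable conditions `(w² h)'(0) = 0`, `(w² h)''(0) ≤ 0`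
give `w² h'' ≤ (6 w'² - 2 w w'') h` at `0`; here `w' = -2 pᵢ` and `w'' = -2`. Summing over `i`
bounds `(ρ² - |p|²)² Δu(p)` by `(24 |p|² + 4 n (ρ² - |p|²)) u(p)`.
-/

/-- The Euclidean Laplacian of `u : ℝⁿ → ℝ`, i.e. the trace of the Hessian. -/
noncomputable def laplacian {n : ℕ} (u : EuclideanSpace ℝ (Fin n) → ℝ)
    (x : EuclideanSpace ℝ (Fin n)) : ℝ :=
  ∑ i : Fin n,
    fderiv ℝ (fun y => fderiv ℝ u y (EuclideanSpace.single i 1)) x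
      (EuclideanSpace.single i 1)

open Topology

theorem IsLocalMax.deriv_deriv_nonpos {f : ℝ → ℝ} {x : ℝ} (h : IsLocalMax f x)
    (hc : ContinuousAt f x) : deriv (deriv f) x ≤ 0 := by
  by_contra! hpos
  -- the second-derivative test makes `x` a local minimum too, so `f` is locally constant
  have hconst : f =ᶠ[𝓝 x] fun _ => f x :=
    (h.and (isLocalMin_of_deriv_deriv_pos hpos h.deriv_eq_zero hc)).mono
      fun _ hy => le_antisymm hy.1 hy.2
  have hderiv : deriv f =ᶠ[𝓝 x] fun _ => 0 := by
    simpa using hconst.deriv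
  simp [hderiv.deriv_eq] at hpos

theorem IsLocalMax.deriv_deriv_le_of_sq_mul {w h : ℝ → ℝ} {x : ℝ} (hw : ContDiff ℝ 2 w)
    (hh : ContDiff ℝ 2 h) (hwx : w x ≠ 0) (hmax : IsLocalMax (fun t => w t ^ 2 * h t) x) :
    w x ^ 2 * deriv (deriv h) x ≤
      (6 * deriv w x ^ 2 - 2 * w x * deriv (deriv w) x) * h x := by
  have hw' : ∀ t, HasDerivAt w (deriv w t) t := fun t =>
    (hw.differentiable (by norm_num) t).hasDerivAt
  have hh' : ∀ t, HasDerivAt h (deriv h t) t := fun t =>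
    (hh.differentiable (by norm_num) t).hasDerivAt
  have hw'' : HasDerivAt (deriv w) (deriv (deriv w) x) x :=
    ((hw.iterate_deriv' 1 1).differentiable one_ne_zero x).hasDerivAt
  have hh'' : HasDerivAt (deriv h) (deriv (deriv h) x) x :=
    ((hh.iterate_deriv' 1 1).differentiable one_ne_zero x).hasDerivAt
  have hfirst : deriv (fun t => w t ^ 2 * h t) =
      fun t => 2 * w t * deriv w t * h t + w t ^ 2 * deriv h t := by
    funext t
    exact (((hw' t).fun_pow 2).fun_mul (hh' t)).deriv.trans (by ring)
  have hcrit : w x * deriv h x = -2 * deriv w x * h x := by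
    have hzero := hmax.deriv_eq_zero
    rw [hfirst] at hzero
    exact mul_left_cancel₀ hwx (by linear_combination hzero)
  have hsecond : 2 * deriv w x ^ 2 * h x + 2 * w x * deriv (deriv w) x * h x
      + 4 * w x * deriv w x * deriv h x + w x ^ 2 * deriv (deriv h) x ≤ 0 := by
    have hneg := hmax.deriv_deriv_nonpos ((hw.continuous.pow 2).mul hh.continuous).continuousAt
    rw [hfirst, ((((hw' x).const_mul 2).fun_mul hw'').fun_mul (hh' x) |>.fun_add
      (((hw' x).fun_pow 2).fun_mul hh'')).deriv] at hneg
    linear_combination hneg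
  linear_combination hsecond - 4 * deriv w x * hcrit

section Line

variable {E : Type*} [NormedAddCommGroup E]

theorem hasDerivAt_comp_add_smul [NormedSpace ℝ E] {F : Type*} [NormedAddCommGroup F]
    [NormedSpace ℝ F] {f : E → F} {p v : E} {t : ℝ} (hf : DifferentiableAt ℝ f (p + t • v)) :
    HasDerivAt (fun s : ℝ => f (p + s • v)) (fderiv ℝ f (p + t • v) v) t :=
  hf.hasFDerivAt.comp_hasDerivAt t
    (((hasDerivAt_id t).smul_const v).const_add p |>.congr_deriv (one_smul ℝ v))

theorem deriv_deriv_comp_add_smul [NormedSpace ℝ E] {u : E → ℝ} (hu : ContDiff ℝ 2 u)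
    (p v : E) :
    deriv (deriv fun s : ℝ => u (p + s • v)) 0 = fderiv ℝ (fun y => fderiv ℝ u y v) p v := by
  have hfirst : deriv (fun s : ℝ => u (p + s • v)) = fun s => fderiv ℝ u (p + s • v) v :=
    funext fun s => (hasDerivAt_comp_add_smul (hu.differentiable (by norm_num) _)).deriv
  have hsecond : DifferentiableAt ℝ (fun y => fderiv ℝ u y v) (p + (0 : ℝ) • v) :=
    ((hu.fderiv_right (m := 1) (by norm_num)).differentiable one_ne_zero _).clm_apply
      (differentiableAt_const v)
  rw [hfirst, (hasDerivAt_comp_add_smul hsecond).deriv, zero_smul, add_zero]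

theorem norm_add_smul_sq [InnerProductSpace ℝ E] (p v : E) (t : ℝ) :
    ‖p + t • v‖ ^ 2 = ‖p‖ ^ 2 + 2 * inner ℝ p v * t + ‖v‖ ^ 2 * t ^ 2 := by
  rw [norm_add_sq_real, real_inner_smul_right, norm_smul, mul_pow, Real.norm_eq_abs, sq_abs]
  ring

theorem IsLocalMax.sq_weight_mul_fderiv_fderiv_le [InnerProductSpace ℝ E] {u : E → ℝ}
    (hu : ContDiff ℝ 2 u) {ρ : ℝ} {p : E} (hp : ρ ^ 2 - ‖p‖ ^ 2 ≠ 0)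
    (hmax : IsLocalMax (fun x => (ρ ^ 2 - ‖x‖ ^ 2) ^ 2 * u x) p) (v : E) :
    (ρ ^ 2 - ‖p‖ ^ 2) ^ 2 * fderiv ℝ (fun y => fderiv ℝ u y v) p v ≤
      (24 * inner ℝ p v ^ 2 + 4 * (ρ ^ 2 - ‖p‖ ^ 2) * ‖v‖ ^ 2) * u p := by
  set a := ρ ^ 2 - ‖p‖ ^ 2
  have hweight : (fun t : ℝ => ρ ^ 2 - ‖p + t • v‖ ^ 2) =
      fun t => a - 2 * inner ℝ p v * t - ‖v‖ ^ 2 * t ^ 2 := by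
    funext t
    rw [norm_add_smul_sq]
    ring
  have hslope : deriv (fun t : ℝ => a - 2 * inner ℝ p v * t - ‖v‖ ^ 2 * t ^ 2) =
      fun t => -(2 * inner ℝ p v) - ‖v‖ ^ 2 * (2 * t) := by
    funext t
    simp (disch := fun_prop) [deriv_fun_sub]
  have hcurv :
      deriv (fun t : ℝ => -(2 * inner ℝ p v) - ‖v‖ ^ 2 * (2 * t)) 0 = -(2 * ‖v‖ ^ 2) := by
    simp (disch := fun_prop) [deriv_fun_sub]
    ring
  have hline : Continuous fun t : ℝ => p + t • v := by fun_prop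
  have key := IsLocalMax.deriv_deriv_le_of_sq_mul (x := 0)
    (w := fun t : ℝ => ρ ^ 2 - ‖p + t • v‖ ^ 2) (h := fun t => u (p + t • v))
    (by rw [hweight]; fun_prop) (hu.comp (by fun_prop)) (by simpa using hp)
    (IsLocalMax.comp_continuous (f := fun x => (ρ ^ 2 - ‖x‖ ^ 2) ^ 2 * u x)
      (by simpa using hmax) hline.continuousAt)
  rw [hweight, deriv_deriv_comp_add_smul hu, hslope, hcurv] at key
  simp only [mul_zero, sub_zero, zero_smul, add_zero] at key
  linear_combination key

end Line

theorem EuclideanSpace.sum_inner_single_sq {ι : Type*} [Fintype ι] [DecidableEq ι]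
    (p : EuclideanSpace ℝ ι) :
    ∑ i, inner ℝ p (EuclideanSpace.single i (1 : ℝ)) ^ 2 = ‖p‖ ^ 2 := by
  simp [EuclideanSpace.inner_single_right, EuclideanSpace.real_norm_sq_eq]

theorem laplacian_estimate_at_max_point_general
    {n : ℕ} (ρ : ℝ) (u : EuclideanSpace ℝ (Fin n) → ℝ)
    (hu : ContDiff ℝ 2 u)
    (p : EuclideanSpace ℝ (Fin n)) (hp : ‖p‖ < ρ)
    (hmax : IsLocalMaxOn (fun x => (ρ ^ 2 - ‖x‖ ^ 2) ^ 2 * u x)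
      (Metric.ball 0 ρ) p) :
    laplacian u p ≤ u p * (24 * ‖p‖ ^ 2 / (ρ ^ 2 - ‖p‖ ^ 2) ^ 2
      + 4 * (n : ℝ) / (ρ ^ 2 - ‖p‖ ^ 2)) := by
  set a := ρ ^ 2 - ‖p‖ ^ 2
  have ha : 0 < a := sub_pos.2 (pow_lt_pow_left₀ hp (norm_nonneg p) two_ne_zero)
  have hmax' := hmax.isLocalMax (Metric.isOpen_ball.mem_nhds (mem_ball_zero_iff.2 hp))
  have hsum : a ^ 2 * laplacian u p ≤ (24 * ‖p‖ ^ 2 + 4 * n * a) * u p := calc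
    _ = ∑ i, a ^ 2 * fderiv ℝ (fun y => fderiv ℝ u y (EuclideanSpace.single i 1)) p
          (EuclideanSpace.single i 1) := Finset.mul_sum ..
    _ ≤ ∑ i, (24 * inner ℝ p (EuclideanSpace.single i (1 : ℝ)) ^ 2
          + 4 * a * ‖EuclideanSpace.single i (1 : ℝ)‖ ^ 2) * u p :=
      Finset.sum_le_sum fun i _ => hmax'.sq_weight_mul_fderiv_fderiv_le hu ha.ne' _
    _ = (24 * ‖p‖ ^ 2 + 4 * n * a) * u p := by
      simp only [PiLp.norm_single, norm_one, one_pow, mul_one, ← Finset.sum_mul,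
        Finset.sum_add_distrib, ← Finset.mul_sum, EuclideanSpace.sum_inner_single_sq,
        Finset.sum_const, Finset.card_univ, Fintype.card_fin, nsmul_eq_mul]
      ring
  calc laplacian u p ≤ (24 * ‖p‖ ^ 2 + 4 * n * a) * u p / a ^ 2 := by
        rwa [le_div_iff₀ (by positivity), mul_comm]
    _ = _ := by field_simp

/-- Let `ρ > 0` and `u : ℝⁿ → ℝ` be C². If `p` with `|p| < ρ`, `u(p) > 0` is a
local maximum of `F(x) = (ρ² − |x|²)²·u(x)` on the open ball of radius `ρ`,
then `Δu(p) ≤ u(p)·(24|p|²/(ρ² − |p|²)² + 4n/(ρ² − |p|²))`. -/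
theorem laplacian_estimate_at_max_point
    {n : ℕ} (ρ : ℝ) (hρ : 0 < ρ) (u : EuclideanSpace ℝ (Fin n) → ℝ)
    (hu : ContDiff ℝ 2 u)
    (p : EuclideanSpace ℝ (Fin n)) (hp : ‖p‖ < ρ) (hup : 0 < u p)
    (hmax : IsLocalMaxOn (fun x => (ρ ^ 2 - ‖x‖ ^ 2) ^ 2 * u x)
      (Metric.ball 0 ρ) p) :
    laplacian u p ≤ u p * (24 * ‖p‖ ^ 2 / (ρ ^ 2 - ‖p‖ ^ 2) ^ 2
      + 4 * (n : ℝ) / (ρ ^ 2 - ‖p‖ ^ 2)) :=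
  laplacian_estimate_at_max_point_general ρ u hu p hp hmax
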